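/- Let T be a right R-module with S = End(T_R), and let Y be a right R-module. If X is a right R-module admitting an exact sequence 0 → X → T_0 → T_1 with T_0, T_1 finite direct sums of direct summands of copies of T, such that Ext^1_R(coker(X → T_0), T) = 0 and Ext^1_R(coker(T_0 → T_1), T) = 0, then the natural map φ_X : Hom_R(Y, X) → Hom_S(Hom_R(X,T), Hom_R(Y,T)), given by φ_X(f)(g) = g ∘ f, is an isomorphism of abelian groups. -/

import Mathlib

noncomputable section
open CategoryTheory

universe u

/-- Vanishing of `Ext^i_A(M, N)` for `A`-modules `M`, `N`. -/
def extVanish (A : Type u) [Ring A] (i : ℕ) (M N : Type u) [AddCommGroup M] [Module A M]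
    [AddCommGroup N] [Module A N] : Prop :=
  Subsingleton
    (((Ext ℤ (ModuleCat.{u} A) i).obj (Opposite.op (ModuleCat.of A M))).obj (ModuleCat.of A N))

/-- `M` is a direct summand of a finite direct sum of copies of `T`, i.e. `M ∈ add T`. -/
def InAdd (A : Type u) [Ring A] (T : Type u) [AddCommGroup T] [Module A T]
    (M : Type u) [AddCommGroup M] [Module A M] : Prop :=
  ∃ (n : ℕ) (ι : M →ₗ[A] (Fin n → T)) (π : (Fin n → T) →ₗ[A] M), π ∘ₗ ι = LinearMap.id

/-- The natural map `φ_X : Hom_A(Y, X) → Hom_S(Hom_A(X,T), Hom_A(Y,T))`, `f ↦ (g ↦ g ∘ f)`,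
where `S = End(T)` acts on Hom-groups into `T` by postcomposition. -/
def homDual (A : Type u) [Ring A] (T : Type u) [AddCommGroup T] [Module A T]
    {X Y : Type u} [AddCommGroup X] [Module A X] [AddCommGroup Y] [Module A Y]
    (f : Y →ₗ[A] X) : (X →ₗ[A] T) →ₗ[Module.End A T] (Y →ₗ[A] T) where
  toFun g := g ∘ₗ f
  map_add' g h := by ext y; rfl
  map_smul' s g := by ext y; rfl

/-!
Maps into `T` separate the points of a module `M ∈ add T`, and every `End(T)`-linear map
`Hom(M, T) → Hom(Y, T)` is precomposition with some `Y → M`: write `g : M → T` through the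
coordinate projections of `Tⁿ`. Hence `φ_X` is injective since `X ⊆ T₀`, and for a given `Φ`
the map `g₀ ↦ Φ (g₀ ∘ f)` is precomposition with some `u : Y → T₀`. As `T` cogenerates `T₁`,
`g ∘ u = 0`, so `u` factors through `X`. Finally `Ext¹(T₀/X, T) = 0` makes every map `X → T`
extend to `T₀`, so `Φ` is precomposition with that factor. The extension is built from a
projective resolution `P` of `T₀/X`: a `1`-cocycle is a coboundary there, and `T₀` is a pushout
of `P₁ → P₀`.
-/

namespace InAdd

variable {A T M : Type u} [Ring A] [AddCommGroup T] [Module A T] [AddCommGroup M] [Module A M]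

theorem eq_zero_of_forall_apply_eq_zero (h : InAdd A T M) {m : M}
    (hm : ∀ φ : M →ₗ[A] T, φ m = 0) : m = 0 := by
  obtain ⟨n, ι, π, hπι⟩ := h
  have hι : ι m = 0 := funext fun i => hm (LinearMap.proj i ∘ₗ ι)
  simpa [hι] using (LinearMap.congr_fun hπι m).symm

theorem exists_comp_eq {Y : Type u} [AddCommGroup Y] [Module A Y] (h : InAdd A T M)
    (Φ : (M →ₗ[A] T) →ₗ[Module.End A T] (Y →ₗ[A] T)) :
    ∃ u : Y →ₗ[A] M, ∀ g : M →ₗ[A] T, Φ g = g ∘ₗ u := by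
  obtain ⟨n, ι, π, hπι⟩ := h
  let e : Fin n → (M →ₗ[A] T) := fun i => LinearMap.proj i ∘ₗ ι
  refine ⟨π ∘ₗ LinearMap.pi fun i => Φ (e i), fun g => ?_⟩
  let s : Fin n → Module.End A T := fun i => g ∘ₗ π ∘ₗ LinearMap.single A (fun _ => T) i
  have expand : ∀ {Z : Type u} [AddCommGroup Z] [Module A Z] (k : Z →ₗ[A] (Fin n → T)),
      g ∘ₗ π ∘ₗ k = ∑ i, s i • (LinearMap.proj i ∘ₗ k) := by
    intro Z _ _ k
    ext z
    simp [s, ← map_sum, Finset.univ_sum_single]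
  calc Φ g = Φ (g ∘ₗ π ∘ₗ ι) := by rw [hπι, LinearMap.comp_id]
    _ = ∑ i, s i • Φ (e i) := by simp only [expand ι, map_sum, map_smul, e]
    _ = g ∘ₗ π ∘ₗ LinearMap.pi fun i => Φ (e i) := by simp only [expand, LinearMap.proj_pi]

end InAdd

section

variable {A : Type u} [Ring A] {X T₀ Y N P T : Type u} [AddCommGroup X] [Module A X]
  [AddCommGroup T₀] [Module A T₀] [AddCommGroup Y] [Module A Y] [AddCommGroup N] [Module A N]
  [AddCommGroup P] [Module A P] [AddCommGroup T] [Module A T]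

theorem LinearMap.exists_comp_eq_of_range_le {f : X →ₗ[A] T₀} (hf : Function.Injective f)
    {u : Y →ₗ[A] T₀} (h : LinearMap.range u ≤ LinearMap.range f) :
    ∃ v : Y →ₗ[A] X, f ∘ₗ v = u :=
  ⟨(LinearEquiv.ofInjective f hf).symm.toLinearMap ∘ₗ u.codRestrict _ fun y => h ⟨y, rfl⟩,
    LinearMap.ext fun y => by simp⟩

theorem LinearMap.exists_comp_eq_of_ker_le {θ : P →ₗ[A] N} (hθ : Function.Surjective θ)
    {ψ : P →ₗ[A] T} (h : LinearMap.ker θ ≤ LinearMap.ker ψ) :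
    ∃ g : N →ₗ[A] T, g ∘ₗ θ = ψ :=
  ⟨(LinearMap.ker θ).liftQ ψ h ∘ₗ (θ.quotKerEquivOfSurjective hθ).symm.toLinearMap,
    LinearMap.ext fun p => by simp⟩

theorem Function.Exact.exists_comp_eq_of_projective_presentation {Q P₀ P₁ : Type u}
    [AddCommGroup Q] [Module A Q] [AddCommGroup P₀] [Module A P₀] [Module.Projective A P₀]
    [AddCommGroup P₁] [Module A P₁] {f : X →ₗ[A] T₀} {p : T₀ →ₗ[A] Q} (hfp : Function.Exact f p)
    (hf : Function.Injective f) (hp : Function.Surjective p) {d : P₁ →ₗ[A] P₀}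
    {π : P₀ →ₗ[A] Q} (hdπ : Function.Exact d π) (hπ : Function.Surjective π)
    (hT : ∀ x : P₁ →ₗ[A] T, LinearMap.ker d ≤ LinearMap.ker x → ∃ y : P₀ →ₗ[A] T, y ∘ₗ d = x)
    (w : X →ₗ[A] T) : ∃ g : T₀ →ₗ[A] T, g ∘ₗ f = w := by
  obtain ⟨α, hα⟩ := Module.projective_lifting_property p π hp
  obtain ⟨β, hβ⟩ : ∃ β : P₁ →ₗ[A] X, f ∘ₗ β = α ∘ₗ d := by
    refine LinearMap.exists_comp_eq_of_range_le hf ?_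
    rintro _ ⟨r, rfl⟩
    refine (hfp _).1 ?_
    simpa [← LinearMap.comp_apply p α, hα] using hdπ.apply_apply_eq_zero r
  obtain ⟨y, hy⟩ := hT (w ∘ₗ β) fun r hr => by
    have : f (β r) = f 0 := by simpa [LinearMap.mem_ker.1 hr] using LinearMap.congr_fun hβ r
    simp [hf this]
  -- `T₀` is the pushout of `d` and `β`, and `y`, `w` agree on `P₁`, so they glue to a map on `T₀`
  let θ := LinearMap.coprod α f
  have hθ : Function.Surjective θ := by
    intro t
    obtain ⟨q, hq⟩ := hπ (p t)
    obtain ⟨x, hx⟩ := (hfp (t - α q)).1 (by simp [← LinearMap.comp_apply p α, hα, hq])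
    exact ⟨(q, x), by simp [θ, hx]⟩
  have hker : LinearMap.ker θ ≤ LinearMap.ker (LinearMap.coprod y w) := by
    rintro ⟨q, x⟩ hqx
    replace hqx : α q + f x = 0 := hqx
    have hπq : π q = 0 := by
      simpa [← hα, hfp.apply_apply_eq_zero] using congrArg p hqx
    obtain ⟨r, rfl⟩ := (hdπ q).1 hπq
    have hx : x = -β r := hf (by
      rw [map_neg, ← LinearMap.comp_apply f β, hβ, eq_neg_iff_add_eq_zero, add_comm]; exact hqx)
    simp [hx, ← LinearMap.comp_apply y d, hy]
  obtain ⟨g, hg⟩ := LinearMap.exists_comp_eq_of_ker_le hθ hker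
  exact ⟨g, LinearMap.ext fun x => by simpa [θ] using LinearMap.congr_fun hg (0, x)⟩

end

theorem CategoryTheory.ProjectiveResolution.exists_comp_d_eq_of_extVanish {A M N : Type u}
    [Ring A] [AddCommGroup M] [Module A M] [AddCommGroup N] [Module A N]
    (P : ProjectiveResolution (ModuleCat.of A M)) (h : extVanish A 1 M N)
    (x : P.complex.X 1 →ₗ[A] N) (hx : x ∘ₗ (P.complex.d 2 1).hom = 0) :
    ∃ y : P.complex.X 0 →ₗ[A] N, y ∘ₗ (P.complex.d 1 0).hom = x := by
  unfold extVanish at h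
  let C := P.complex.linearYonedaObj ℤ (ModuleCat.of A N)
  have : Subsingleton (C.homology 1) :=
    ((forget (ModuleCat ℤ)).mapIso (P.isoExt 1 (ModuleCat.of A N))).toEquiv.symm.subsingleton
  have hexact : C.ExactAt 1 :=
    (C.exactAt_iff_isZero_homology 1).2 (ModuleCat.isZero_of_subsingleton _)
  rw [C.exactAt_iff' 0 1 2 (by simp) (by simp), ShortComplex.moduleCat_exact_iff] at hexact
  obtain ⟨y, hy⟩ := hexact (ModuleCat.ofHom x)
    (ModuleCat.hom_ext hx : P.complex.d 2 1 ≫ ModuleCat.ofHom x = 0)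
  exact ⟨y.hom, congrArg ModuleCat.Hom.hom hy⟩

theorem exists_comp_eq_of_extVanish {A X T₀ T : Type u} [Ring A] [AddCommGroup X] [Module A X]
    [AddCommGroup T₀] [Module A T₀] [AddCommGroup T] [Module A T] {f : X →ₗ[A] T₀}
    (hf : Function.Injective f) (h : extVanish A 1 (T₀ ⧸ LinearMap.range f) T)
    (w : X →ₗ[A] T) : ∃ g : T₀ →ₗ[A] T, g ∘ₗ f = w := by
  let P := projectiveResolution (ModuleCat.of A (T₀ ⧸ LinearMap.range f))
  have hπ : Function.Surjective (P.π.f 0).hom := (ModuleCat.epi_iff_surjective _).1 inferInstance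
  have hdπ : Function.Exact (P.complex.d 1 0).hom (P.π.f 0).hom :=
    (ShortComplex.ShortExact.moduleCat_exact_iff_function_exact _).1 P.exact₀
  refine (LinearMap.exact_map_mkQ_range f).exists_comp_eq_of_projective_presentation hf
    (Submodule.mkQ_surjective _) hdπ hπ (fun x hx => P.exists_comp_d_eq_of_extVanish h x ?_) w
  ext r
  exact hx (LinearMap.mem_ker.2 (congr($(P.complex.d_comp_d 2 1 0).hom r)))

section homDual

variable {A T X Y : Type u} [Ring A] [AddCommGroup T] [Module A T] [AddCommGroup X] [Module A X]
  [AddCommGroup Y] [Module A Y]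

theorem homDual_injective {M : Type u} [AddCommGroup M] [Module A M] (hM : InAdd A T M)
    {f : X →ₗ[A] M} (hf : Function.Injective f) :
    Function.Injective (fun v : Y →ₗ[A] X => homDual A T v) := by
  intro v₁ v₂ hv
  ext y
  refine hf (sub_eq_zero.1 (hM.eq_zero_of_forall_apply_eq_zero fun φ => ?_))
  have := LinearMap.congr_fun (LinearMap.congr_fun hv (φ ∘ₗ f)) y
  simpa [homDual, sub_eq_zero] using this

theorem homDual_surjective {T₀ T₁ : Type u} [AddCommGroup T₀] [Module A T₀] [AddCommGroup T₁]
    [Module A T₁] (hT₀ : InAdd A T T₀) (hT₁ : InAdd A T T₁) {f : X →ₗ[A] T₀}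
    {g : T₀ →ₗ[A] T₁} (hf : Function.Injective f) (hfg : Function.Exact f g)
    (h : extVanish A 1 (T₀ ⧸ LinearMap.range f) T) :
    Function.Surjective (fun v : Y →ₗ[A] X => homDual A T v) := by
  intro Φ
  obtain ⟨u, hu⟩ := hT₀.exists_comp_eq (Φ ∘ₗ homDual A T f)
  have hu_range : LinearMap.range u ≤ LinearMap.range f := by
    rintro _ ⟨y, rfl⟩
    refine (hfg _).1 (hT₁.eq_zero_of_forall_apply_eq_zero fun φ => ?_)
    have hφ : (φ ∘ₗ g) ∘ₗ f = 0 := by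
      rw [LinearMap.comp_assoc, hfg.linearMap_comp_eq_zero, LinearMap.comp_zero]
    have := LinearMap.congr_fun (hu (φ ∘ₗ g)) y
    simpa [homDual, hφ] using this.symm
  obtain ⟨v, hv⟩ := LinearMap.exists_comp_eq_of_range_le hf hu_range
  refine ⟨v, LinearMap.ext fun w => ?_⟩
  obtain ⟨g₀, rfl⟩ := exists_comp_eq_of_extVanish hf h w
  change (g₀ ∘ₗ f) ∘ₗ v = Φ (g₀ ∘ₗ f)
  rw [LinearMap.comp_assoc, hv]
  exact (hu g₀).symm

end homDual

theorem homDual_bijective_general (R : Type u) [Ring R] (T : Type u) [AddCommGroup T]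
    [Module Rᵐᵒᵖ T] (Y : Type u) [AddCommGroup Y] [Module Rᵐᵒᵖ Y]
    (X : Type u) [AddCommGroup X] [Module Rᵐᵒᵖ X]
    (T₀ T₁ : Type u) [AddCommGroup T₀] [Module Rᵐᵒᵖ T₀] [AddCommGroup T₁] [Module Rᵐᵒᵖ T₁]
    (hT₀ : InAdd Rᵐᵒᵖ T T₀) (hT₁ : InAdd Rᵐᵒᵖ T T₁)
    (f : X →ₗ[Rᵐᵒᵖ] T₀) (g : T₀ →ₗ[Rᵐᵒᵖ] T₁)
    (hf : Function.Injective f) (hfg : Function.Exact f g)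
    (h₁ : extVanish Rᵐᵒᵖ 1 (T₀ ⧸ LinearMap.range f) T) :
    Function.Bijective (fun f' : Y →ₗ[Rᵐᵒᵖ] X => homDual Rᵐᵒᵖ T f') :=
  ⟨homDual_injective hT₀ hf, homDual_surjective hT₀ hT₁ hf hfg h₁⟩

/-- Let `T` be a right `R`-module, `S = End(T_R)`, `Y` a right `R`-module.  If
`X` admits an exact sequence `0 → X → T₀ → T₁` with `T₀, T₁ ∈ add T`,
`Ext¹(coker(X → T₀), T) = 0` and `Ext¹(coker(T₀ → T₁), T) = 0`, then the natural map
`φ_X : Hom_R(Y, X) → Hom_S(Hom_R(X,T), Hom_R(Y,T))` is an isomorphism of abelian groups. -/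
theorem homDual_bijective (R : Type u) [Ring R] (T : Type u) [AddCommGroup T]
    [Module Rᵐᵒᵖ T] (Y : Type u) [AddCommGroup Y] [Module Rᵐᵒᵖ Y]
    (X : Type u) [AddCommGroup X] [Module Rᵐᵒᵖ X]
    (T₀ T₁ : Type u) [AddCommGroup T₀] [Module Rᵐᵒᵖ T₀] [AddCommGroup T₁] [Module Rᵐᵒᵖ T₁]
    (hT₀ : InAdd Rᵐᵒᵖ T T₀) (hT₁ : InAdd Rᵐᵒᵖ T T₁)
    (f : X →ₗ[Rᵐᵒᵖ] T₀) (g : T₀ →ₗ[Rᵐᵒᵖ] T₁)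
    (hf : Function.Injective f) (hfg : Function.Exact f g)
    (h₁ : extVanish Rᵐᵒᵖ 1 (T₀ ⧸ LinearMap.range f) T)
    (h₂ : extVanish Rᵐᵒᵖ 1 (T₁ ⧸ LinearMap.range g) T) :
    Function.Bijective (fun f' : Y →ₗ[Rᵐᵒᵖ] X => homDual Rᵐᵒᵖ T f') :=
  homDual_bijective_general R T Y X T₀ T₁ hT₀ hT₁ f g hf hfg h₁

end
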